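/- Let N ≥ 1. A function g : ℚ^N → ℚ has finite functional degree if and only if there exists a polynomial P ∈ ℚ[t_1, …, t_N] with g(x) = P(x_1, …, x_N) for all x ∈ ℚ^N. Moreover, if fdeg(g) ≤ d for d ∈ ℕ, then P can be chosen of total degree at most d. -/

import Mathlib

/-- The difference operator `Δ_a` sending `f` to `x ↦ f (x + a) - f x`. -/
def disc {A B : Type*} [AddCommGroup A] [AddCommGroup B] (a : A) (f : A → B) : A → B :=
  fun x => f (x + a) - f x

/-- Iterated difference operator `Δ_{a_1} ⋯ Δ_{a_k} f` along a list `[a_1, …, a_k]`. -/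
def multiDisc {A B : Type*} [AddCommGroup A] [AddCommGroup B] : List A → (A → B) → (A → B)
  | [], f => f
  | a :: l, f => disc a (multiDisc l f)

/-- `FdegLE f d` says that the functional degree of `f` is at most `d`, i.e. all
`(d+1)`-fold iterated differences of `f` vanish. -/
def FdegLE {A B : Type*} [AddCommGroup A] [AddCommGroup B] (f : A → B) (d : ℕ) : Prop :=
  ∀ l : List A, l.length = d + 1 → multiDisc l f = 0


/-!
Polynomials of total degree at most `d` have functional degree at most `d` by the Leibniz rule
`Δₐ (f g) = Δₐ f · g (· + a) + f · Δₐ g`.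

The heart of the converse: if `h` has functional degree at most `d` and vanishes on the lattice
simplex `{n ∈ ℕ^N | |n| ≤ d}`, then `h = 0`. By induction on `d`, each `Δ_{e_i} h` vanishes on the
smaller simplex, hence everywhere, so `h` is `e_i`-periodic. By the Gregory–Newton formula,
`k ↦ h (x + k • r • e_i)` is a polynomial in `k ∈ ℕ`; it is constant along the multiples of the
denominator of `r`, hence constant. So `h` is invariant under all translations, and `h = h 0 = 0`.

Applied to polynomials, this makes evaluation on the simplex injective on polynomials of degree at
most `d`, hence bijective by a dimension count. If `P` interpolates `g` on the simplex, applying it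
to `g - P` gives `g = P`.
-/

open Finset

section AddCommGroup

variable {A B : Type*} [AddCommGroup A] [AddCommGroup B]

theorem multiDisc_add (l : List A) (f g : A → B) :
    multiDisc l (f + g) = multiDisc l f + multiDisc l g := by
  induction l with
  | nil => rfl
  | cons a l ih => exact (congrArg (disc a) ih).trans (fwdDiff_add a _ _)

def multiDiscAddHom (l : List A) : (A → B) →+ (A → B) :=
  AddMonoidHom.mk' (multiDisc l) (multiDisc_add l)

theorem multiDisc_append (l₁ l₂ : List A) (f : A → B) :
    multiDisc (l₁ ++ l₂) f = multiDisc l₁ (multiDisc l₂ f) := by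
  induction l₁ with
  | nil => rfl
  | cons a l ih => rw [List.cons_append, multiDisc, ih, multiDisc]

theorem multiDisc_replicate (n : ℕ) (a : A) (f : A → B) :
    multiDisc (List.replicate n a) f = (fwdDiff a)^[n] f := by
  induction n with
  | zero => rfl
  | succ n ih => rw [List.replicate_succ, multiDisc, ih, Function.iterate_succ_apply']; rfl

theorem multiDisc_comp_add_right (l : List A) (a : A) (f : A → B) :
    multiDisc l (fun x => f (x + a)) = fun x => multiDisc l f (x + a) := by
  induction l with
  | nil => rfl
  | cons b l ih => funext x; simp only [multiDisc, ih, disc, add_right_comm]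

theorem fdegLE_zero_fun (d : ℕ) : FdegLE (0 : A → B) d :=
  fun l _ => map_zero (multiDiscAddHom l)

theorem fdegLE_zero_iff {f : A → B} : FdegLE f 0 ↔ ∀ a, disc a f = 0 :=
  ⟨fun h a => h [a] rfl, fun h l hl => by
    obtain ⟨a, rfl⟩ := List.length_eq_one_iff.1 hl
    exact h a⟩

theorem fdegLE_succ_iff {f : A → B} {d : ℕ} : FdegLE f (d + 1) ↔ ∀ a, FdegLE (disc a f) d := by
  refine ⟨fun h a l hl => ?_, fun h l hl => ?_⟩
  · simpa [multiDisc_append, multiDisc] using h (l ++ [a]) (by simp [hl])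
  · obtain ⟨l, a, rfl⟩ := List.eq_nil_or_concat l |>.resolve_left (by rintro rfl; simp at hl)
    simpa [multiDisc_append, multiDisc] using h a l (by simpa using hl)

theorem fdegLE_const (b : B) : FdegLE (fun _ : A => b) 0 :=
  fdegLE_zero_iff.2 fun _ => funext fun _ => sub_self b

theorem fdegLE_addMonoidHom (ℓ : A →+ B) : FdegLE ℓ 1 :=
  fdegLE_succ_iff.2 fun a => by
    convert fdegLE_const (ℓ a) using 1
    funext x
    simp [disc]

namespace FdegLE

variable {f g : A → B} {d : ℕ}

theorem mono (hf : FdegLE f d) {d' : ℕ} (hd : d ≤ d') : FdegLE f d' := by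
  intro l hl
  rw [← List.take_append_drop (d' - d) l, multiDisc_append, hf (l.drop (d' - d)) (by simp; omega)]
  exact map_zero (multiDiscAddHom _)

theorem disc (hf : FdegLE f (d + 1)) (a : A) : FdegLE (disc a f) d :=
  fdegLE_succ_iff.1 hf a

theorem add (hf : FdegLE f d) (hg : FdegLE g d) : FdegLE (f + g) d := fun l hl => by
  rw [multiDisc_add, hf l hl, hg l hl, add_zero]

theorem sub (hf : FdegLE f d) (hg : FdegLE g d) : FdegLE (f - g) d := fun l hl =>
  (map_sub (multiDiscAddHom l) f g).trans (by simp [multiDiscAddHom, hf l hl, hg l hl])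

theorem sum {ι : Type*} {s : Finset ι} {f : ι → A → B} (hf : ∀ i ∈ s, FdegLE (f i) d) :
    FdegLE (∑ i ∈ s, f i) d := fun l hl =>
  (map_sum (multiDiscAddHom l) f s).trans (Finset.sum_eq_zero fun i hi => hf i hi l hl)

theorem comp_add_right (hf : FdegLE f d) (a : A) : FdegLE (fun x => f (x + a)) d := fun l hl => by
  rw [multiDisc_comp_add_right, hf l hl]
  rfl

theorem fwdDiff_iter_eq_zero (hf : FdegLE f d) (a : A) {n : ℕ} (hn : d < n) :
    (fwdDiff a)^[n] f = 0 := by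
  rw [← multiDisc_replicate]
  exact hf.mono (Nat.le_sub_one_of_lt hn) _ (by simp; omega)

end FdegLE

end AddCommGroup

section CommRing

variable {A R : Type*} [AddCommGroup A] [CommRing R]

theorem disc_mul (a : A) (f g : A → R) :
    disc a (f * g) = disc a f * (fun x => g (x + a)) + f * disc a g := by
  funext x
  simp only [disc, Pi.add_apply, Pi.mul_apply]
  ring

namespace FdegLE

theorem mul {f g : A → R} {m n : ℕ} (hf : FdegLE f m) (hg : FdegLE g n) :
    FdegLE (f * g) (m + n) := by
  induction hk : m + n using Nat.strong_induction_on generalizing m n f g with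
  | _ k ih =>
  rcases k with _ | k
  · obtain ⟨rfl, rfl⟩ : m = 0 ∧ n = 0 := by omega
    rw [fdegLE_zero_iff] at hf hg ⊢
    intro a
    rw [disc_mul, hf, hg, zero_mul, mul_zero, add_zero]
  refine fdegLE_succ_iff.2 fun a => disc_mul a f g ▸ add ?_ ?_
  · rcases m with _ | m
    · rw [fdegLE_zero_iff.1 hf a, zero_mul]
      exact fdegLE_zero_fun k
    · exact (ih (m + n) (by omega) (hf.disc a) (hg.comp_add_right a) rfl).mono (by omega)
  · rcases n with _ | n
    · rw [fdegLE_zero_iff.1 hg a, mul_zero]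
      exact fdegLE_zero_fun k
    · exact (ih (m + n) (by omega) hf (hg.disc a) rfl).mono (by omega)

theorem pow {f : A → R} {m : ℕ} (hf : FdegLE f m) (k : ℕ) : FdegLE (f ^ k) (k * m) := by
  induction k with
  | zero => rw [pow_zero, zero_mul]; exact fdegLE_const 1
  | succ k ih => simpa [pow_succ, add_mul] using ih.mul hf

theorem prod {ι : Type*} {s : Finset ι} {f : ι → A → R} {m : ι → ℕ}
    (hf : ∀ i ∈ s, FdegLE (f i) (m i)) : FdegLE (∏ i ∈ s, f i) (∑ i ∈ s, m i) := by
  induction s using Finset.cons_induction with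
  | empty => rw [prod_empty, sum_empty]; exact fdegLE_const 1
  | cons i s hi ih =>
    rw [prod_cons, sum_cons]
    exact (hf i (mem_cons_self i s)).mul (ih fun j hj => hf j (mem_cons_of_mem hj))

end FdegLE

theorem fdegLE_eval_of_totalDegree_le {σ : Type*} [Fintype σ] {P : MvPolynomial σ R} {d : ℕ}
    (hP : P.totalDegree ≤ d) : FdegLE (fun x : σ → R => MvPolynomial.eval x P) d := by
  have hmonomial (β : σ →₀ ℕ) : FdegLE (∏ i, (fun x : σ → R => x i) ^ β i) (∑ i, β i) :=
    FdegLE.prod fun i _ => by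
      have hcoord : FdegLE (fun x : σ → R => x i) 1 :=
        fdegLE_addMonoidHom (Pi.evalAddMonoidHom (fun _ : σ => R) i)
      simpa only [mul_one] using hcoord.pow (β i)
  have heval : (fun x : σ → R => MvPolynomial.eval x P) =
      ∑ β ∈ P.support, (fun _ => P.coeff β) * ∏ i, (fun x : σ → R => x i) ^ β i := by
    funext x
    simp [MvPolynomial.eval_eq', Finset.sum_apply, Finset.prod_apply]
  rw [heval]
  refine FdegLE.sum fun β hβ => ((fdegLE_const _).mul (hmonomial β)).mono ?_
  have := MvPolynomial.le_totalDegree hβ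
  rw [Finsupp.sum_fintype _ _ fun _ => rfl] at this
  omega

end CommRing

section Field

variable {A K : Type*} [AddCommGroup A] [Field K] [CharZero K]

open Polynomial in
theorem FdegLE.exists_polynomial_eval_nsmul {f : A → K} {d : ℕ} (hf : FdegLE f d) (x y : A) :
    ∃ Q : K[X], ∀ k : ℕ, f (x + k • y) = Q.eval (k : K) := by
  set c : ℕ → K := fun j => (fwdDiff y)^[j] f x
  refine ⟨∑ j ∈ range (d + 1), C (c j / j.factorial) * descPochhammer K j, fun k => ?_⟩
  have hterm (j : ℕ) : (C (c j / j.factorial) * descPochhammer K j).eval (k : K) =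
      k.choose j * c j := by
    rw [eval_mul, eval_C, descPochhammer_eval_eq_descFactorial,
      Nat.descFactorial_eq_factorial_mul_choose]
    have : (j.factorial : K) ≠ 0 := Nat.cast_ne_zero.2 j.factorial_ne_zero
    push_cast
    field_simp
  simp only [shift_eq_sum_fwdDiff_iter, eval_finsetSum, hterm, nsmul_eq_mul]
  rw [sum_subset (range_subset_range.2 (le_max_left (k + 1) (d + 1))),
    sum_subset (range_subset_range.2 (le_max_right (k + 1) (d + 1)))]
  · intro j _ hj
    rw [show c j = 0 from congrFun (hf.fwdDiff_iter_eq_zero y (by simpa using hj)) x, mul_zero]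
  · intro j _ hj
    rw [Nat.choose_eq_zero_of_lt (by simpa using hj), Nat.cast_zero, zero_mul]

theorem FdegLE.periodic_rat_smul [Module ℚ A] {f : A → K} {d : ℕ} (hf : FdegLE f d) {y : A}
    (hy : Function.Periodic f y) (r : ℚ) : Function.Periodic f (r • y) := by
  intro x
  obtain ⟨Q, hQ⟩ := hf.exists_polynomial_eval_nsmul x (r • y)
  have hmult (j : ℕ) : Q.eval ((j * r.den : ℕ) : K) = f x := by
    have : (j * r.den) • r • y = (j * r.num) • y := by
      rw [← Nat.cast_smul_eq_nsmul ℚ, ← Int.cast_smul_eq_zsmul ℚ, smul_smul]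
      push_cast
      rw [mul_assoc, mul_comm (r.den : ℚ), Rat.mul_den_eq_num]
    rw [← hQ, this, (hy.zsmul _) x]
  have hQ_const : Q = Polynomial.C (f x) := by
    refine Polynomial.eq_of_infinite_eval_eq _ _ (Set.infinite_of_injective_forall_mem
      (f := fun j : ℕ => ((j * r.den : ℕ) : K)) (fun i j hij => ?_) fun j => ?_)
    · simpa [r.den_nz] using hij
    · simp only [Set.mem_ofPred_eq, hmult, Polynomial.eval_C]
  simpa [hQ_const] using hQ 1

end Field

theorem FdegLE.eq_zero_of_forall_degree_le {ι K : Type*} [Fintype ι] [Field K] [CharZero K]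
    {h : (ι → ℚ) → K} {d : ℕ} (hh : FdegLE h d)
    (h0 : ∀ n : ι →₀ ℕ, n.degree ≤ d → h (fun i => n i) = 0) : h = 0 := by
  induction d generalizing h with
  | zero =>
    have h_origin : h 0 = 0 := by simpa [Pi.zero_def] using h0 0 le_rfl
    funext x
    have hx : h (0 + x) - h 0 = 0 := congrFun (fdegLE_zero_iff.1 hh x) 0
    rwa [zero_add, sub_eq_zero, h_origin] at hx
  | succ d ih =>
    classical
    have hper (i : ι) : Function.Periodic h (Pi.single i 1) := by
      refine fun x => sub_eq_zero.1 (congrFun (ih (hh.disc _) fun n hn => ?_) x)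
      have hcast : (fun j => (n j : ℚ)) + Pi.single i 1 =
          fun j => ((n + Finsupp.single i 1 : ι →₀ ℕ) j : ℚ) := by
        funext j
        simp [Pi.single_apply, Finsupp.single_apply, eq_comm]
      rw [_root_.disc, hcast, h0 (n + Finsupp.single i 1) (by simpa using hn), h0 n (by omega),
        sub_zero]
    have hall (x : ι → ℚ) : Function.Periodic h x := by
      rw [← Finset.univ_sum_single x]
      refine Finset.sum_induction _ _ (fun _ _ => Function.Periodic.add_period) (by simp) ?_
      intro i _
      have := hh.periodic_rat_smul (hper i) (x i)
      rwa [← Pi.single_smul', smul_eq_mul, mul_one] at this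
    have h_origin : h 0 = 0 := by simpa [Pi.zero_def] using h0 0 (by simp)
    funext x
    simpa [h_origin] using hall x 0

open Module in
theorem MvPolynomial.exists_totalDegree_le_forall_eval_natCast_eq {σ : Type*} [Fintype σ]
    (d : ℕ) (φ : (σ →₀ ℕ) → ℚ) :
    ∃ P : MvPolynomial σ ℚ, P.totalDegree ≤ d ∧
      ∀ n : σ →₀ ℕ, n.degree ≤ d → eval (fun i => (n i : ℚ)) P = φ n := by
  -- `n.degree` in the form used by `restrictTotalDegree`, so that `basisRestrictSupport` applies
  let S : Set (σ →₀ ℕ) := {n | n.sum (fun _ e => e) ≤ d}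
  have : Finite S := (Finsupp.finite_of_degree_le d).to_subtype
  let L : restrictTotalDegree σ ℚ d →ₗ[ℚ] (S → ℚ) :=
    LinearMap.pi fun n => (aeval fun i => (n.1 i : ℚ)).toLinearMap ∘ₗ Submodule.subtype _
  have hL_injective : Function.Injective L := by
    refine (injective_iff_map_eq_zero L).2 fun ⟨P, hP⟩ hLP => Subtype.ext ?_
    have hP_zero := (fdegLE_eval_of_totalDegree_le ((mem_restrictTotalDegree _ _ _).1 hP)
      ).eq_zero_of_forall_degree_le fun n hn => by simpa [L] using congrFun hLP ⟨n, hn⟩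
    exact MvPolynomial.funext fun x => by simpa using congrFun hP_zero x
  have hrank : finrank ℚ (restrictTotalDegree σ ℚ d) = finrank ℚ (S → ℚ) :=
    (finrank_eq_nat_card_basis (basisRestrictSupport ℚ S)).trans
      (finrank_eq_nat_card_basis (Pi.basisFun ℚ S)).symm
  obtain ⟨⟨P, hP⟩, hLP⟩ :=
    (LinearMap.injective_iff_surjective_of_finrank_eq_finrank hrank).1 hL_injective fun n => φ n
  exact ⟨P, (mem_restrictTotalDegree _ _ _).1 hP,
    fun n hn => by simpa [L] using congrFun hLP ⟨n, hn⟩⟩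

theorem FdegLE.exists_totalDegree_le_eval_eq {σ : Type*} [Fintype σ] {g : (σ → ℚ) → ℚ} {d : ℕ}
    (hg : FdegLE g d) :
    ∃ P : MvPolynomial σ ℚ, P.totalDegree ≤ d ∧ ∀ x, g x = MvPolynomial.eval x P := by
  obtain ⟨P, hPd, hP⟩ :=
    MvPolynomial.exists_totalDegree_le_forall_eval_natCast_eq d fun n => g fun i => n i
  have hdiff := (hg.sub (fdegLE_eval_of_totalDegree_le hPd)).eq_zero_of_forall_degree_le
    fun n hn => sub_eq_zero.2 (hP n hn).symm
  exact ⟨P, hPd, fun x => sub_eq_zero.1 (congrFun hdiff x)⟩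

theorem finite_fdeg_iff_polynomial_rat_general
    (N : ℕ) (g : (Fin N → ℚ) → ℚ) :
    ((∃ d : ℕ, FdegLE g d) ↔
      ∃ P : MvPolynomial (Fin N) ℚ, ∀ x, g x = MvPolynomial.eval x P) ∧
    (∀ d : ℕ, FdegLE g d →
      ∃ P : MvPolynomial (Fin N) ℚ, P.totalDegree ≤ d ∧ ∀ x, g x = MvPolynomial.eval x P) := by
  refine ⟨⟨fun ⟨d, hd⟩ => ?_, fun ⟨P, hP⟩ => ⟨P.totalDegree, ?_⟩⟩,
    fun d hd => hd.exists_totalDegree_le_eval_eq⟩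
  · obtain ⟨P, -, hP⟩ := hd.exists_totalDegree_le_eval_eq
    exact ⟨P, hP⟩
  · rw [funext hP]
    exact fdegLE_eval_of_totalDegree_le le_rfl

/-- **Functions `ℚ^N → ℚ` of finite functional degree are polynomial functions.**
A function `g : ℚ^N → ℚ` has finite functional degree iff it is given by a polynomial
`P ∈ ℚ[t_1, …, t_N]`; moreover if `fdeg g ≤ d` then `P` may be chosen with total degree
at most `d`. -/
theorem finite_fdeg_iff_polynomial_rat
    (N : ℕ) (hN : 1 ≤ N) (g : (Fin N → ℚ) → ℚ) :
    ((∃ d : ℕ, FdegLE g d) ↔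
      ∃ P : MvPolynomial (Fin N) ℚ, ∀ x, g x = MvPolynomial.eval x P) ∧
    (∀ d : ℕ, FdegLE g d →
      ∃ P : MvPolynomial (Fin N) ℚ, P.totalDegree ≤ d ∧ ∀ x, g x = MvPolynomial.eval x P) :=
  finite_fdeg_iff_polynomial_rat_general N g
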